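/- Let F be a field, G a group with subgroups H₁ and H₂, and let V₁ and V₂ be modules over FH₁ and FH₂ respectively. Let D be a system of representatives for the (H₁,H₂)-double cosets in G. Then there is an isomorphism of FG-modules ind_{H₁}^G V₁ ⊗_F ind_{H₂}^G V₂ ≅ ⊕_{d∈D} V(d), where for each d∈D and any choice of (x,y) ∈ G×G with H₁x⁻¹yH₂ = H₁dH₂, V(d) ≅ ind_{H^{(x,y)}}^G (V₁ˣ ⊗_F V₂ʸ) with H^{(x,y)} = xH₁x⁻¹ ∩ yH₂y⁻¹. In particular, ind_{H₁}^G V₁ ⊗_F ind_{H₂}^G V₂ ≅ ⊕_{y∈D} ind_{H₁ ∩ yH₂y⁻¹}^G (V₁ ⊗_F V₂ʸ). No finiteness assumptions on G, the subgroups, or the modules are made. -/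

import Mathlib

open scoped TensorProduct DirectSum

section Preliminaries

variable (F : Type*) [Field F]

/-- Isomorphism (equivalence) of representations: an `F`-linear equivalence intertwining
the two actions. -/
def RepIso {G : Type*} [Monoid G] {V V' : Type*} [AddCommMonoid V] [Module F V]
    [AddCommMonoid V'] [Module F V'] (ρ : Representation F G V) (τ : Representation F G V') :
    Prop :=
  ∃ e : V ≃ₗ[F] V', ∀ (g : G) (v : V), e (ρ g v) = τ g (e v)

/-- Irreducibility of a representation: the space is nonzero and admits no invariant
subspaces other than `⊥` and `⊤`. -/
def IsIrreducibleRep {G : Type*} [Monoid G] {V : Type*} [AddCommMonoid V] [Module F V]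
    (ρ : Representation F G V) : Prop :=
  Nontrivial V ∧ ∀ p : Submodule F V, (∀ g : G, ∀ v ∈ p, ρ g v ∈ p) → p = ⊥ ∨ p = ⊤

/-- The subrepresentation on an invariant submodule. -/
def subRep {G : Type*} [Monoid G] {V : Type*} [AddCommMonoid V] [Module F V]
    (ρ : Representation F G V) (p : Submodule F V) (hp : ∀ g : G, ∀ v ∈ p, ρ g v ∈ p) :
    Representation F G ↥p where
  toFun g := (ρ g).restrict (fun v hv => hp g v hv)
  map_one' := by ext v; simp [LinearMap.restrict_apply]
  map_mul' g₁ g₂ := by ext v; simp [LinearMap.restrict_apply]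

/-- A representation is completely reducible if the underlying module is the sum of its
irreducible invariant submodules. -/
def IsCompletelyReducibleRep {G : Type*} [Monoid G] {V : Type*} [AddCommMonoid V]
    [Module F V] (ρ : Representation F G V) : Prop :=
  sSup {q : Submodule F V |
    ∃ hq : ∀ g : G, ∀ v ∈ q, ρ g v ∈ q, IsIrreducibleRep F (subRep F ρ q hq)} = ⊤

/-- The homogeneous component determined by `σ`: the sum of all irreducible invariant
submodules whose subrepresentation is isomorphic to `σ`. -/
noncomputable def homComponent {G : Type*} [Monoid G] {V W : Type*} [AddCommMonoid V]
    [Module F V] [AddCommMonoid W] [Module F W] (ρ : Representation F G V)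
    (σ : Representation F G W) : Submodule F V :=
  sSup {q : Submodule F V |
    ∃ hq : ∀ g : G, ∀ v ∈ q, ρ g v ∈ q,
      IsIrreducibleRep F (subRep F ρ q hq) ∧ RepIso F (subRep F ρ q hq) σ}

/-- The set of all homogeneous components of a representation. -/
noncomputable def homComponents {G : Type*} [Monoid G] {V : Type*} [AddCommMonoid V]
    [Module F V] (ρ : Representation F G V) : Set (Submodule F V) :=
  {S | ∃ (q : Submodule F V) (hq : ∀ g : G, ∀ v ∈ q, ρ g v ∈ q),
      IsIrreducibleRep F (subRep F ρ q hq) ∧ S = homComponent F ρ (subRep F ρ q hq)}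

/-- A representation `ρ` lies over `σ` if it admits an invariant submodule whose
subrepresentation is isomorphic to `σ`. -/
def LiesOver {G : Type*} [Monoid G] {V W : Type*} [AddCommMonoid V] [Module F V]
    [AddCommMonoid W] [Module F W] (ρ : Representation F G V) (σ : Representation F G W) :
    Prop :=
  ∃ (q : Submodule F V) (hq : ∀ g : G, ∀ v ∈ q, ρ g v ∈ q),
    RepIso F (subRep F ρ q hq) σ

/-- The stabilizer in `G` of a subspace of a representation space. -/
def stabSubgroup {G : Type*} [Group G] {V : Type*} [AddCommGroup V] [Module F V]
    (ρ : Representation F G V) (S : Submodule F V) : Subgroup G where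
  carrier := {g : G | S.map (ρ g) = S}
  one_mem' := by
    show S.map (ρ 1) = S
    rw [map_one, Module.End.one_eq_id]
    exact Submodule.map_id S
  mul_mem' := by
    intro a b ha hb
    show S.map (ρ (a * b)) = S
    rw [map_mul, Module.End.mul_eq_comp, Submodule.map_comp, hb, ha]
  inv_mem' := by
    intro a ha
    show S.map (ρ a⁻¹) = S
    conv_lhs => rw [← ha]
    rw [← Submodule.map_comp, ← Module.End.mul_eq_comp, ← map_mul, inv_mul_cancel, map_one,
      Module.End.one_eq_id, Submodule.map_id]

theorem stabSubgroup_mapsTo {G : Type*} [Group G] {V : Type*} [AddCommGroup V] [Module F V]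
    (ρ : Representation F G V) (S : Submodule F V) :
    ∀ g : ↥(stabSubgroup F ρ S), ∀ v ∈ S, ρ (g : G) v ∈ S := by
  intro g v hv
  have hg : S.map (ρ (g : G)) = S := g.2
  have := Submodule.mem_map_of_mem (f := ρ (g : G)) hv
  rwa [hg] at this

/-- Outer tensor product of representations of two groups. -/
noncomputable def outerRep {G₁ G₂ : Type*} [Monoid G₁] [Monoid G₂] {V₁ V₂ : Type*}
    [AddCommMonoid V₁] [Module F V₁] [AddCommMonoid V₂] [Module F V₂]
    (ρ₁ : Representation F G₁ V₁) (ρ₂ : Representation F G₂ V₂) :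
    Representation F (G₁ × G₂) (V₁ ⊗[F] V₂) :=
  Representation.tprod (ρ₁.comp (MonoidHom.fst G₁ G₂)) (ρ₂.comp (MonoidHom.snd G₁ G₂))

/-- A projective representation with factor set `α`. -/
def IsProjRep {G : Type*} [Group G] {W : Type*} [AddCommGroup W] [Module F W]
    (X : G → (W →ₗ[F] W)) (α : G → G → Fˣ) : Prop :=
  (∀ g : G, Function.Bijective (X g)) ∧
    ∀ g₁ g₂ : G, (X g₁) ∘ₗ (X g₂) = ((α g₁ g₂ : F)) • X (g₁ * g₂)

/-- Irreducibility of a projective representation: no proper nonzero invariant subspace. -/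
def IsProjIrred {G : Type*} [Group G] {W : Type*} [AddCommGroup W] [Module F W]
    (X : G → (W →ₗ[F] W)) : Prop :=
  Nontrivial W ∧ ∀ p : Submodule F W, (∀ g : G, ∀ w ∈ p, X g w ∈ p) → p = ⊥ ∨ p = ⊤

/-- `D` is a system of representatives for the `(H₁,H₂)`-double cosets in `G`. -/
def IsDCosetReps {G : Type*} [Group G] (H₁ H₂ : Subgroup G) (D : Set G) : Prop :=
  ∀ g : G, ∃! d : G, d ∈ D ∧ ∃ h₁ ∈ H₁, ∃ h₂ ∈ H₂, g = h₁ * d * h₂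

end Preliminaries

section Induction

variable (F : Type*) [Field F] {G : Type*} [Group G] (H : Subgroup G)
variable {W : Type*} [AddCommGroup W] [Module F W] (σ : Representation F ↥H W)

/-- The submodule of relations defining the induced module `FG ⊗_{FH} W` as a quotient
of `FG ⊗_F W`. -/
noncomputable def indRel : Submodule (MonoidAlgebra F G) (MonoidAlgebra F G ⊗[F] W) :=
  Submodule.span (MonoidAlgebra F G)
    {z | ∃ (x : H) (w : W),
      z = (MonoidAlgebra.single (x : G) (1 : F)) ⊗ₜ[F] w
            - (1 : MonoidAlgebra F G) ⊗ₜ[F] (σ x w)}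

/-- The underlying space of the induced module `ind_H^G W = FG ⊗_{FH} W`. -/
noncomputable def IndCar := (MonoidAlgebra F G ⊗[F] W) ⧸ indRel F H σ

noncomputable instance : AddCommGroup (IndCar F H σ) :=
  inferInstanceAs (AddCommGroup ((MonoidAlgebra F G ⊗[F] W) ⧸ indRel F H σ))

noncomputable instance : Module (MonoidAlgebra F G) (IndCar F H σ) :=
  inferInstanceAs (Module (MonoidAlgebra F G) ((MonoidAlgebra F G ⊗[F] W) ⧸ indRel F H σ))

noncomputable instance : Module F (IndCar F H σ) :=
  inferInstanceAs (Module F ((MonoidAlgebra F G ⊗[F] W) ⧸ indRel F H σ))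

noncomputable instance : IsScalarTower F (MonoidAlgebra F G) (IndCar F H σ) :=
  inferInstanceAs (IsScalarTower F (MonoidAlgebra F G)
    ((MonoidAlgebra F G ⊗[F] W) ⧸ indRel F H σ))

/-- The induced representation of `G` on `ind_H^G W = FG ⊗_{FH} W`. -/
noncomputable def IndRep : Representation F G (IndCar F H σ) where
  toFun g :=
    { toFun := fun v => (MonoidAlgebra.single g (1 : F) : MonoidAlgebra F G) • v
      map_add' := fun a b => smul_add _ a b
      map_smul' := fun c v => smul_comm _ c v }
  map_one' := by
    ext v
    show MonoidAlgebra.single (1 : G) (1 : F) • v = v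
    rw [← MonoidAlgebra.one_def, one_smul]
  map_mul' g₁ g₂ := by
    ext v
    show MonoidAlgebra.single (g₁ * g₂) (1 : F) • v = _
    rw [show (MonoidAlgebra.single (g₁ * g₂) (1 : F) : MonoidAlgebra F G)
          = MonoidAlgebra.single g₁ 1 * MonoidAlgebra.single g₂ 1 by
        rw [MonoidAlgebra.single_mul_single, one_mul], mul_smul]
    rfl

end Induction

section DirectSums

variable (F : Type*) [Field F] {G : Type*} [Monoid G]

/-- The direct sum of a family of representations. -/
noncomputable def dsumRep {ι : Type*} {V : ι → Type*} [∀ i, AddCommGroup (V i)]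
    [∀ i, Module F (V i)] (ρ : ∀ i, Representation F G (V i)) :
    Representation F G (⨁ i, V i) where
  toFun g := DFinsupp.mapRange.linearMap (fun i => ρ i g)
  map_one' := by
    simp only [map_one]
    exact DFinsupp.mapRange.linearMap_id
  map_mul' g₁ g₂ := by
    simp only [map_mul, Module.End.mul_eq_comp]
    exact DFinsupp.mapRange.linearMap_comp (fun i => ρ i g₁) (fun i => ρ i g₂)

end DirectSums

section Conjugation

variable {G : Type*} [Group G]

/-- Conjugation `x ↦ g x g⁻¹` as a monoid homomorphism of a normal subgroup. -/
def conjHom {N : Subgroup G} (hN : N.Normal) (g : G) : ↥N →* ↥N where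
  toFun x := ⟨g * (x : G) * g⁻¹, hN.conj_mem x.1 x.2 g⟩
  map_one' := by ext; simp
  map_mul' x y := by ext; simp [mul_assoc]

/-- The conjugate subgroup `xHx⁻¹`. -/
def conjSubgroup (x : G) (H : Subgroup G) : Subgroup G :=
  H.map (MulAut.conj x).toMonoidHom

/-- Conjugating back: the homomorphism `K → H`, `k ↦ x⁻¹ k x`, for `K ≤ xHx⁻¹`. -/
def unconjHom (x : G) (H : Subgroup G) {K : Subgroup G} (hK : K ≤ conjSubgroup x H) :
    ↥K →* ↥H where
  toFun k := ⟨x⁻¹ * (k : G) * x, by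
    obtain ⟨h, hh, e⟩ := hK k.2
    have : x⁻¹ * (k : G) * x = h := by
      rw [← e]; simp [MulAut.conj_apply, mul_assoc]
    rw [this]; exact hh⟩
  map_one' := by ext; simp
  map_mul' a b := by
    ext
    show x⁻¹ * (↑a * ↑b) * x = (x⁻¹ * ↑a * x) * (x⁻¹ * ↑b * x)
    group

/-- The homomorphism `K ∩ xHx⁻¹ → H` (with the source regarded as a subgroup of `K`),
given by `k ↦ x⁻¹ k x`. -/
def mackeyHom (x : G) (H K : Subgroup G) :
    ↥((K ⊓ conjSubgroup x H).subgroupOf K) →* ↥H where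
  toFun l := ⟨x⁻¹ * ((l : ↥K) : G) * x, by
    have h2 : ((l : ↥K) : G) ∈ K ⊓ conjSubgroup x H := l.2
    obtain ⟨h, hh, e⟩ := h2.2
    have : x⁻¹ * ((l : ↥K) : G) * x = h := by
      rw [← e]; simp [MulAut.conj_apply, mul_assoc]
    rw [this]; exact hh⟩
  map_one' := by ext; simp
  map_mul' a b := by
    ext
    show x⁻¹ * (↑↑a * ↑↑b) * x = (x⁻¹ * ↑↑a * x) * (x⁻¹ * ↑↑b * x)
    group

end Conjugation

/-!
Fix the transversal `Quotient.out` of `G ⧸ H`. Writing `g = (g : G ⧸ H).out * h` with `h ∈ H`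
identifies `ind_H^G W` with `⊕_{G ⧸ H} W`, where `g` moves the summand of `c` to that of `g • c`
and acts on it by the `H`-part of `g * c.out`. The tensor product of two induced modules thus
becomes a sum of copies of `V₁ ⊗ V₂` indexed by the `G`-set `G ⧸ H₁ × G ⧸ H₂`. Its orbits
correspond to the `(H₁, H₂)`-double cosets, the orbit of `(xH₁, yH₂)` being
`G ⧸ (xH₁x⁻¹ ∩ yH₂y⁻¹)`, and on each orbit the two coordinate descriptions agree up to the action
of the `H₁`- and `H₂`-parts of the chosen representatives.
-/

open QuotientGroup

namespace QuotientGroup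

variable {G : Type*} [Group G] (H : Subgroup G)

noncomputable def cosetOffset (g : G) : H :=
  ⟨(g : G ⧸ H).out⁻¹ * g, by rw [← QuotientGroup.eq, out_eq']⟩

@[simp]
lemma out_mul_cosetOffset (g : G) : (g : G ⧸ H).out * cosetOffset H g = g :=
  mul_inv_cancel_left _ g

lemma cosetOffset_mul_of_mem (g : G) (h : H) :
    cosetOffset H (g * h) = cosetOffset H g * h := by
  ext
  simp [cosetOffset, mk_mul_of_mem g h.2, mul_assoc]

lemma cosetOffset_out (c : G ⧸ H) : cosetOffset H c.out = 1 := by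
  ext; simp [cosetOffset]

end QuotientGroup

noncomputable def Finsupp.lcongrFamily {R ι κ M N : Type*} [CommSemiring R] [AddCommMonoid M]
    [Module R M] [AddCommMonoid N] [Module R N] (e : ι ≃ κ) (f : ι → M ≃ₗ[R] N) :
    (ι →₀ M) ≃ₗ[R] (κ →₀ N) :=
  LinearEquiv.ofLinearMap (Finsupp.lsum R fun i => Finsupp.lsingle (e i) ∘ₗ (f i).toLinearMap)
    (Finsupp.lsum R fun j => Finsupp.lsingle (e.symm j) ∘ₗ (f (e.symm j)).symm.toLinearMap)
    (Finsupp.lhom_ext fun j n => by simp) (Finsupp.lhom_ext fun i m => by simp)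

lemma Finsupp.lcongrFamily_single {R ι κ M N : Type*} [CommSemiring R] [AddCommMonoid M]
    [Module R M] [AddCommMonoid N] [Module R N] (e : ι ≃ κ) (f : ι → M ≃ₗ[R] N) (i : ι) (m : M) :
    Finsupp.lcongrFamily e f (Finsupp.single i m) = Finsupp.single (e i) (f i m) :=
  Finsupp.lsum_single _ _ _ _

lemma MonoidAlgebra.tensorProduct_ext {F G W M : Type*} [CommSemiring F] [Monoid G]
    [AddCommMonoid W] [Module F W] [AddCommMonoid M] [Module F M]
    {φ ψ : MonoidAlgebra F G ⊗[F] W →ₗ[F] M}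
    (h : ∀ g w, φ (MonoidAlgebra.single g 1 ⊗ₜ w) = ψ (MonoidAlgebra.single g 1 ⊗ₜ w)) : φ = ψ :=
  TensorProduct.ext ((MonoidAlgebra.basis G F).ext fun g => LinearMap.ext fun w => h g w)

section FinsuppModel

variable {F : Type*} [CommSemiring F] {G : Type*} [Group G] (H : Subgroup G)
variable {W : Type*} [AddCommMonoid W] [Module F W] (σ : Representation F H W)

-- The coordinates of `g ⊗ w ∈ ind_H^G W`.
noncomputable def cosetSingle (g : G) : W →ₗ[F] G ⧸ H →₀ W :=
  Finsupp.lsingle (g : G ⧸ H) ∘ₗ σ (cosetOffset H g)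

lemma cosetSingle_apply (g : G) (w : W) :
    cosetSingle H σ g w = Finsupp.single (g : G ⧸ H) (σ (cosetOffset H g) w) := rfl

lemma cosetSingle_mul_of_mem (g : G) (h : H) (w : W) :
    cosetSingle H σ (g * h) w = cosetSingle H σ g (σ h w) := by
  simp [cosetSingle_apply, cosetOffset_mul_of_mem, mk_mul_of_mem g h.2]

lemma cosetSingle_out (c : G ⧸ H) (w : W) : cosetSingle H σ c.out w = Finsupp.single c w := by
  rw [cosetSingle_apply, cosetOffset_out, map_one, Module.End.one_apply, out_eq']

lemma cosetSingle_out_mul {K : Subgroup G} (x : G) (φ : K →* H)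
    (hφ : ∀ k : K, (φ k : G) = x⁻¹ * k * x) (g : G) (w : W) :
    cosetSingle H σ ((g : G ⧸ K).out * x) (σ (φ (cosetOffset K g)) w)
      = cosetSingle H σ (g * x) w := by
  rw [← cosetSingle_mul_of_mem, hφ]
  conv_rhs => rw [← out_mul_cosetOffset K g]
  group

lemma lsum_cosetSingle_mul_out (g a : G) (w : W) :
    Finsupp.lsum F (fun c => cosetSingle H σ (g * c.out)) (cosetSingle H σ a w)
      = cosetSingle H σ (g * a) w := by
  conv_rhs => rw [← out_mul_cosetOffset H a, ← mul_assoc, cosetSingle_mul_of_mem]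
  rw [cosetSingle_apply, Finsupp.lsum_single]

noncomputable def finsuppIndRep : Representation F G (G ⧸ H →₀ W) where
  toFun g := Finsupp.lsum F fun c => cosetSingle H σ (g * c.out)
  map_one' := Finsupp.lhom_ext fun c w => by
    rw [Finsupp.lsum_single, one_mul, cosetSingle_out, Module.End.one_apply]
  map_mul' g₁ g₂ := Finsupp.lhom_ext fun c w => by
    rw [Module.End.mul_apply, Finsupp.lsum_single, Finsupp.lsum_single, lsum_cosetSingle_mul_out,
      mul_assoc]

lemma finsuppIndRep_single (g : G) (c : G ⧸ H) (w : W) :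
    finsuppIndRep H σ g (Finsupp.single c w) = cosetSingle H σ (g * c.out) w :=
  Finsupp.lsum_single _ _ _ _

lemma finsuppIndRep_cosetSingle (g a : G) (w : W) :
    finsuppIndRep H σ g (cosetSingle H σ a w) = cosetSingle H σ (g * a) w :=
  lsum_cosetSingle_mul_out H σ g a w

end FinsuppModel

section DirectSum

variable {F : Type*} [Field F] {G : Type*} [Monoid G] {ι : Type*} {V : ι → Type*}
  [∀ i, AddCommGroup (V i)] [∀ i, Module F (V i)] (ρ : ∀ i, Representation F G (V i))

lemma dsumRep_apply (g : G) (v : ⨁ i, V i) (i : ι) : dsumRep F ρ g v i = ρ i g (v i) :=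
  DFinsupp.mapRange_apply _ (fun _ => map_zero _) _ _

lemma dsumRep_single [DecidableEq ι] (g : G) (i : ι) (v : V i) :
    dsumRep F ρ g (DFinsupp.single i v) = DFinsupp.single i (ρ i g v) :=
  DFinsupp.mapRange_single (hf := fun _ => map_zero _)

end DirectSum

namespace RepIso

variable {F : Type*} [Field F] {G : Type*} [Monoid G]

lemma of_comp_eq {V V' : Type*} [AddCommMonoid V] [Module F V] [AddCommMonoid V'] [Module F V']
    {ρ : Representation F G V} {τ : Representation F G V'} (e : V ≃ₗ[F] V')
    (h : ∀ g, e.toLinearMap ∘ₗ ρ g = τ g ∘ₗ e.toLinearMap) : RepIso F ρ τ :=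
  ⟨e, fun g => LinearMap.congr_fun (h g)⟩

lemma symm {V V' : Type*} [AddCommMonoid V] [Module F V] [AddCommMonoid V'] [Module F V']
    {ρ : Representation F G V} {τ : Representation F G V'} (h : RepIso F ρ τ) :
    RepIso F τ ρ := by
  obtain ⟨e, he⟩ := h
  exact ⟨e.symm, fun g v => e.injective (by simp [he])⟩

lemma trans {V V' V'' : Type*} [AddCommMonoid V] [Module F V] [AddCommMonoid V']
    [Module F V'] [AddCommMonoid V''] [Module F V'']
    {ρ : Representation F G V} {τ : Representation F G V'} {π : Representation F G V''}
    (h : RepIso F ρ τ) (h' : RepIso F τ π) : RepIso F ρ π := by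
  obtain ⟨e, he⟩ := h
  obtain ⟨e', he'⟩ := h'
  exact ⟨e.trans e', fun g v => by simp [he, he']⟩

lemma tprod {V₁ V₂ W₁ W₂ : Type*} [AddCommMonoid V₁] [Module F V₁] [AddCommMonoid V₂]
    [Module F V₂] [AddCommMonoid W₁] [Module F W₁] [AddCommMonoid W₂] [Module F W₂]
    {ρ₁ : Representation F G V₁} {τ₁ : Representation F G W₁}
    {ρ₂ : Representation F G V₂} {τ₂ : Representation F G W₂}
    (h₁ : RepIso F ρ₁ τ₁) (h₂ : RepIso F ρ₂ τ₂) :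
    RepIso F (ρ₁.tprod ρ₂) (τ₁.tprod τ₂) := by
  obtain ⟨e₁, he₁⟩ := h₁
  obtain ⟨e₂, he₂⟩ := h₂
  refine of_comp_eq (TensorProduct.congr e₁ e₂) fun g => TensorProduct.ext' fun v₁ v₂ => ?_
  simp [he₁, he₂]

lemma dsum {ι : Type*} {V W : ι → Type*} [∀ i, AddCommGroup (V i)] [∀ i, Module F (V i)]
    [∀ i, AddCommGroup (W i)] [∀ i, Module F (W i)]
    {ρ : ∀ i, Representation F G (V i)} {τ : ∀ i, Representation F G (W i)}
    (h : ∀ i, RepIso F (ρ i) (τ i)) :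
    RepIso F (dsumRep F ρ) (dsumRep F τ) := by
  choose e he using h
  refine ⟨DFinsupp.mapRange.linearEquiv e, fun g v => DFinsupp.ext fun i => ?_⟩
  change e i (dsumRep F ρ g v i) = dsumRep F τ g _ i
  rw [dsumRep_apply, dsumRep_apply, he]
  rfl

end RepIso

section InducedModel

variable {F : Type*} [Field F] {G : Type*} [Group G] (H : Subgroup G)
variable {W : Type*} [AddCommGroup W] [Module F W] (σ : Representation F H W)

lemma mk_single_mul_tmul (g : G) (h : H) (w : W) :
    (Submodule.Quotient.mk (MonoidAlgebra.single (g * h) (1 : F) ⊗ₜ[F] w) : IndCar F H σ)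
      = Submodule.Quotient.mk (MonoidAlgebra.single g (1 : F) ⊗ₜ[F] σ h w) := by
  rw [Submodule.Quotient.eq]
  have hrel := (indRel F H σ).smul_mem (MonoidAlgebra.single g (1 : F))
    (Submodule.subset_span ⟨h, w, rfl⟩)
  rwa [smul_sub, TensorProduct.smul_tmul', TensorProduct.smul_tmul', smul_eq_mul, smul_eq_mul,
    MonoidAlgebra.single_mul_single, mul_one, mul_one] at hrel

noncomputable def tensorToFinsupp : MonoidAlgebra F G ⊗[F] W →ₗ[F] G ⧸ H →₀ W :=
  TensorProduct.lift ((MonoidAlgebra.basis G F).constr F (cosetSingle H σ))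

lemma tensorToFinsupp_single_tmul (g : G) (w : W) :
    tensorToFinsupp H σ (MonoidAlgebra.single g 1 ⊗ₜ w) = cosetSingle H σ g w := by
  rw [tensorToFinsupp, TensorProduct.lift.tmul, ← MonoidAlgebra.basis_apply,
    Module.Basis.constr_basis]

lemma indRel_le_ker_tensorToFinsupp :
    (indRel F H σ).restrictScalars F ≤ LinearMap.ker (tensorToFinsupp H σ) := by
  -- `F[G]` is spanned over `F` by `G`, so it suffices to check the `G`-translates of the relations.
  rw [indRel, ← Submodule.span_smul_of_span_eq_top (MonoidAlgebra.basis G F).span_eq,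
    Submodule.span_le]
  rintro _ ⟨_, ⟨g, rfl⟩, _, ⟨h, w, rfl⟩, rfl⟩
  simp only [MonoidAlgebra.basis_apply, smul_sub, TensorProduct.smul_tmul', smul_eq_mul,
    MonoidAlgebra.single_mul_single, mul_one, SetLike.mem_coe, LinearMap.mem_ker, map_sub,
    tensorToFinsupp_single_tmul, cosetSingle_mul_of_mem, sub_self]

noncomputable def indToFinsupp : IndCar F H σ →ₗ[F] G ⧸ H →₀ W :=
  ((indRel F H σ).restrictScalars F).liftQ (tensorToFinsupp H σ)
      (indRel_le_ker_tensorToFinsupp H σ) ∘ₗ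
    (Submodule.Quotient.restrictScalarsEquiv F (indRel F H σ)).symm.toLinearMap

lemma indToFinsupp_mk (z : MonoidAlgebra F G ⊗[F] W) :
    indToFinsupp H σ (Submodule.Quotient.mk z) = tensorToFinsupp H σ z := rfl

noncomputable def finsuppToInd : (G ⧸ H →₀ W) →ₗ[F] IndCar F H σ :=
  Finsupp.lsum F fun c => ((indRel F H σ).mkQ.restrictScalars F) ∘ₗ
    TensorProduct.mk F (MonoidAlgebra F G) W (MonoidAlgebra.single c.out 1)

lemma finsuppToInd_single (c : G ⧸ H) (w : W) :
    finsuppToInd H σ (Finsupp.single c w)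
      = Submodule.Quotient.mk (MonoidAlgebra.single c.out (1 : F) ⊗ₜ[F] w) :=
  Finsupp.lsum_single _ _ _ _

lemma finsuppToInd_cosetSingle (g : G) (w : W) :
    finsuppToInd H σ (cosetSingle H σ g w)
      = Submodule.Quotient.mk (MonoidAlgebra.single g (1 : F) ⊗ₜ[F] w) := by
  rw [cosetSingle_apply, finsuppToInd_single, ← mk_single_mul_tmul, out_mul_cosetOffset]

noncomputable def indEquivFinsupp : IndCar F H σ ≃ₗ[F] (G ⧸ H →₀ W) :=
  LinearEquiv.ofLinearMap (indToFinsupp H σ) (finsuppToInd H σ)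
    (Finsupp.lhom_ext fun c w => by
      rw [LinearMap.comp_apply, finsuppToInd_single, indToFinsupp_mk, tensorToFinsupp_single_tmul,
        cosetSingle_out, LinearMap.id_apply])
    (LinearMap.ext fun v => by
      obtain ⟨z, rfl⟩ := Submodule.Quotient.mk_surjective _ v
      suffices finsuppToInd H σ ∘ₗ tensorToFinsupp H σ
          = (indRel F H σ).mkQ.restrictScalars F from congr($this z)
      refine MonoidAlgebra.tensorProduct_ext fun g w => ?_
      rw [LinearMap.comp_apply, tensorToFinsupp_single_tmul, finsuppToInd_cosetSingle]
      rfl)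

lemma tensorToFinsupp_single_smul (g : G) (z : MonoidAlgebra F G ⊗[F] W) :
    tensorToFinsupp H σ (MonoidAlgebra.single g (1 : F) • z)
      = finsuppIndRep H σ g (tensorToFinsupp H σ z) := by
  suffices tensorToFinsupp H σ ∘ₗ DistribSMul.toLinearMap F _ (MonoidAlgebra.single g (1 : F))
      = finsuppIndRep H σ g ∘ₗ tensorToFinsupp H σ from congr($this z)
  refine MonoidAlgebra.tensorProduct_ext fun a w => ?_
  rw [LinearMap.comp_apply, LinearMap.comp_apply, DistribSMul.toLinearMap_apply,
    TensorProduct.smul_tmul', smul_eq_mul, MonoidAlgebra.single_mul_single, mul_one,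
    tensorToFinsupp_single_tmul, tensorToFinsupp_single_tmul, finsuppIndRep_cosetSingle]

lemma repIso_indRep_finsuppIndRep : RepIso F (IndRep F H σ) (finsuppIndRep H σ) :=
  ⟨indEquivFinsupp H σ, fun g v => by
    obtain ⟨z, rfl⟩ := Submodule.Quotient.mk_surjective _ v
    exact tensorToFinsupp_single_smul H σ g z⟩

end InducedModel

section DoubleCosets

open DoubleCoset MulAction

variable {G : Type*} [Group G] {H₁ H₂ : Subgroup G}

lemma mem_conjSubgroup_iff {x g : G} {H : Subgroup G} :
    g ∈ conjSubgroup x H ↔ x⁻¹ * g * x ∈ H := by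
  refine ⟨?_, fun h => ⟨x⁻¹ * g * x, h, by simp [mul_assoc]⟩⟩
  rintro ⟨h, hh, rfl⟩
  simpa [mul_assoc] using hh

lemma conjSubgroup_one (H : Subgroup G) : conjSubgroup 1 H = H := by
  ext; simp [mem_conjSubgroup_iff]

lemma stabilizer_mk_prod_mk (a b : G) :
    stabilizer G ((a : G ⧸ H₁), (b : G ⧸ H₂)) = conjSubgroup a H₁ ⊓ conjSubgroup b H₂ := by
  ext g
  simp only [mem_stabilizer_iff, Prod.smul_mk, Prod.mk.injEq, Quotient.smul_mk, smul_eq_mul,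
    QuotientGroup.eq, Subgroup.mem_inf, mem_conjSubgroup_iff]
  have e (c : G) : (g * c)⁻¹ * c = (c⁻¹ * g * c)⁻¹ := by group
  simp only [e, inv_mem_iff]

lemma exists_smul_mk_prod_mk_eq_iff (a b a' b' : G) :
    (∃ g : G, g • ((a : G ⧸ H₁), (b : G ⧸ H₂)) = ((a' : G ⧸ H₁), (b' : G ⧸ H₂))) ↔
      a'⁻¹ * b' ∈ doubleCoset (a⁻¹ * b) H₁ H₂ := by
  simp only [Prod.smul_mk, Prod.mk.injEq, Quotient.smul_mk, smul_eq_mul, QuotientGroup.eq,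
    mem_doubleCoset]
  constructor
  · rintro ⟨g, h₁, h₂⟩
    refine ⟨_, H₁.inv_mem h₁, _, h₂, by group⟩
  · rintro ⟨h₁, hh₁, h₂, hh₂, e⟩
    refine ⟨a' * h₁ * a⁻¹, by simpa using H₁.inv_mem hh₁, ?_⟩
    rw [show (a' * h₁ * a⁻¹ * b)⁻¹ * b' = b⁻¹ * a * h₁⁻¹ * (a'⁻¹ * b') by group, e,
      show b⁻¹ * a * h₁⁻¹ * (h₁ * (a⁻¹ * b) * h₂) = h₂ by group]
    exact hh₂

lemma out_smul_of_le_stabilizer {X : Type*} [MulAction G X] {K : Subgroup G} {p : X}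
    (hK : K ≤ stabilizer G p) (g : G) : (g : G ⧸ K).out • p = g • p := by
  obtain ⟨k, hk⟩ := QuotientGroup.mk_out_eq_mul K g
  rw [hk, mul_smul, mem_stabilizer_iff.1 (hK k.2)]

lemma IsDCosetReps.eq_of_mem_doubleCoset {D : Set G} (hD : IsDCosetReps H₁ H₂ D) {d d' g : G}
    (hd : d ∈ D) (hd' : d' ∈ D) (hg : g ∈ doubleCoset d H₁ H₂) (hg' : g ∈ doubleCoset d' H₁ H₂) :
    d = d' :=
  (hD g).unique ⟨hd, mem_doubleCoset.1 hg⟩ ⟨hd', mem_doubleCoset.1 hg'⟩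

end DoubleCosets

section MackeyIndex

open DoubleCoset MulAction

variable {G : Type*} [Group G] (H₁ H₂ : Subgroup G) {D : Set G} (x y : D → G) (K : D → Subgroup G)

noncomputable def mackeyIndex (p : Σ d : D, G ⧸ K d) : (G ⧸ H₁) × (G ⧸ H₂) :=
  p.2.out • ((x p.1 : G ⧸ H₁), (y p.1 : G ⧸ H₂))

variable {H₁ H₂ x y K}

lemma mackeyIndex_bijective (hD : IsDCosetReps H₁ H₂ D)
    (hxy : ∀ d : D, (x d)⁻¹ * y d ∈ doubleCoset (d : G) H₁ H₂)
    (hK : ∀ d, K d = stabilizer G ((x d : G ⧸ H₁), (y d : G ⧸ H₂))) :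
    Function.Bijective (mackeyIndex H₁ H₂ x y K) := by
  constructor
  · rintro ⟨d, c⟩ ⟨d', c'⟩ h
    simp only [mackeyIndex] at h
    obtain rfl : d = d' := by
      have hmem : (x d')⁻¹ * y d' ∈ doubleCoset ((x d)⁻¹ * y d) H₁ H₂ :=
        (exists_smul_mk_prod_mk_eq_iff _ _ _ _).1
          ⟨c'.out⁻¹ * c.out, by rw [mul_smul, h, inv_smul_smul]⟩
      rw [doubleCoset_eq_of_mem (hxy d)] at hmem
      exact Subtype.ext (hD.eq_of_mem_doubleCoset d.2 d'.2 hmem (hxy d'))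
    have hc : c.out⁻¹ * c'.out ∈ K d := by
      rw [SetLike.ext_iff.1 (hK d), mem_stabilizer_iff, mul_smul, ← h, inv_smul_smul]
    rw [← QuotientGroup.out_eq' c, ← QuotientGroup.out_eq' c', QuotientGroup.eq.2 hc]
  · rintro ⟨c₁, c₂⟩
    obtain ⟨a, rfl⟩ := QuotientGroup.mk_surjective c₁
    obtain ⟨b, rfl⟩ := QuotientGroup.mk_surjective c₂
    obtain ⟨d, ⟨hd, hab⟩, -⟩ := hD (a⁻¹ * b)
    have hab' : a⁻¹ * b ∈ doubleCoset ((x ⟨d, hd⟩)⁻¹ * y ⟨d, hd⟩) H₁ H₂ := by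
      rw [doubleCoset_eq_of_mem (hxy _)]
      exact mem_doubleCoset.2 hab
    obtain ⟨g, hg⟩ := (exists_smul_mk_prod_mk_eq_iff _ _ _ _).2 hab'
    exact ⟨⟨⟨d, hd⟩, g⟩, (out_smul_of_le_stabilizer (hK _).le g).trans hg⟩

end MackeyIndex

section MackeyIsomorphism

variable {F : Type*} [Field F] {G : Type*} [Group G] {H₁ H₂ : Subgroup G}
  {V₁ : Type*} [AddCommGroup V₁] [Module F V₁] (ρ₁ : Representation F H₁ V₁)
  {V₂ : Type*} [AddCommGroup V₂] [Module F V₂] (ρ₂ : Representation F H₂ V₂)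
  {D : Set G} {x y : D → G} {K : D → Subgroup G}

-- `(d, c)` goes to `(c.out * x d, c.out * y d)`, which differ from the representatives of their
-- cosets by the `cosetOffset`s acting here.
noncomputable def mackeyEquiv (hb : Function.Bijective (mackeyIndex H₁ H₂ x y K)) :
    (⨁ d : D, (G ⧸ K d →₀ V₁ ⊗[F] V₂)) ≃ₗ[F] (G ⧸ H₁ →₀ V₁) ⊗[F] (G ⧸ H₂ →₀ V₂) :=
  (sigmaFinsuppLequivDFinsupp F).symm ≪≫ₗ
    Finsupp.lcongrFamily (Equiv.ofBijective _ hb) (fun p => TensorProduct.congr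
      (LinearMap.GeneralLinearGroup.toLinearEquiv
        (ρ₁.asGroupHom (cosetOffset H₁ (p.2.out * x p.1))))
      (LinearMap.GeneralLinearGroup.toLinearEquiv
        (ρ₂.asGroupHom (cosetOffset H₂ (p.2.out * y p.1))))) ≪≫ₗ
    (finsuppTensorFinsupp F F V₁ V₂ _ _).symm

lemma mackeyEquiv_single_single_tmul [DecidableEq D]
    (hb : Function.Bijective (mackeyIndex H₁ H₂ x y K))
    (d : D) (c : G ⧸ K d) (v₁ : V₁) (v₂ : V₂) :
    mackeyEquiv ρ₁ ρ₂ hb (DFinsupp.single d (Finsupp.single c (v₁ ⊗ₜ v₂)))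
      = cosetSingle H₁ ρ₁ (c.out * x d) v₁ ⊗ₜ cosetSingle H₂ ρ₂ (c.out * y d) v₂ := by
  have hsigma : (sigmaFinsuppLequivDFinsupp F).symm
      (DFinsupp.single d (Finsupp.single c (v₁ ⊗ₜ v₂)))
        = Finsupp.single (⟨d, c⟩ : Σ d : D, G ⧸ K d) (v₁ ⊗ₜ[F] v₂) :=
    (LinearEquiv.symm_apply_eq _).2
      (sigmaFinsuppEquivDFinsupp_single (⟨d, c⟩ : Σ d : D, G ⧸ K d) (v₁ ⊗ₜ[F] v₂)).symm
  rw [mackeyEquiv, LinearEquiv.trans_apply, LinearEquiv.trans_apply, hsigma,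
    Finsupp.lcongrFamily_single]
  exact finsuppTensorFinsupp_symm_single _ _ _ _ _ _ _ _ _

lemma repIso_tprod_finsuppIndRep (f₁ : ∀ d, K d →* H₁) (f₂ : ∀ d, K d →* H₂)
    (hf₁ : ∀ d (k : K d), (f₁ d k : G) = (x d)⁻¹ * k * x d)
    (hf₂ : ∀ d (k : K d), (f₂ d k : G) = (y d)⁻¹ * k * y d)
    (hb : Function.Bijective (mackeyIndex H₁ H₂ x y K)) :
    RepIso F ((finsuppIndRep H₁ ρ₁).tprod (finsuppIndRep H₂ ρ₂))
      (dsumRep F fun d =>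
        finsuppIndRep (K d) (Representation.tprod (ρ₁.comp (f₁ d)) (ρ₂.comp (f₂ d)))) := by
  classical
  refine (RepIso.of_comp_eq (mackeyEquiv ρ₁ ρ₂ hb) fun g => ?_).symm
  refine DFinsupp.lhom_ext' fun d => Finsupp.lhom_ext' fun c =>
    TensorProduct.ext' fun v₁ v₂ => ?_
  simp only [LinearMap.comp_apply, DFinsupp.lsingle_apply, Finsupp.lsingle_apply,
    LinearEquiv.coe_coe, Representation.tprod_apply]
  rw [dsumRep_single, finsuppIndRep_single, cosetSingle_apply, Representation.tprod_apply,
    TensorProduct.map_tmul, mackeyEquiv_single_single_tmul, mackeyEquiv_single_single_tmul,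
    TensorProduct.map_tmul, MonoidHom.comp_apply, MonoidHom.comp_apply,
    cosetSingle_out_mul H₁ ρ₁ (x d) (f₁ d) (hf₁ d), cosetSingle_out_mul H₂ ρ₂ (y d) (f₂ d) (hf₂ d),
    finsuppIndRep_cosetSingle, finsuppIndRep_cosetSingle, mul_assoc, mul_assoc]

lemma repIso_tprod_indRep (f₁ : ∀ d, K d →* H₁) (f₂ : ∀ d, K d →* H₂)
    (hf₁ : ∀ d (k : K d), (f₁ d k : G) = (x d)⁻¹ * k * x d)
    (hf₂ : ∀ d (k : K d), (f₂ d k : G) = (y d)⁻¹ * k * y d)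
    (hD : IsDCosetReps H₁ H₂ D)
    (hxy : ∀ d : D, (x d)⁻¹ * y d ∈ DoubleCoset.doubleCoset (d : G) H₁ H₂)
    (hK : ∀ d, K d = conjSubgroup (x d) H₁ ⊓ conjSubgroup (y d) H₂) :
    RepIso F ((IndRep F H₁ ρ₁).tprod (IndRep F H₂ ρ₂))
      (dsumRep F fun d =>
        IndRep F (K d) (Representation.tprod (ρ₁.comp (f₁ d)) (ρ₂.comp (f₂ d)))) :=
  have hb := mackeyIndex_bijective hD hxy fun d => (hK d).trans (stabilizer_mk_prod_mk _ _).symm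
  ((repIso_indRep_finsuppIndRep H₁ ρ₁).tprod (repIso_indRep_finsuppIndRep H₂ ρ₂)).trans <|
    (repIso_tprod_finsuppIndRep ρ₁ ρ₂ f₁ f₂ hf₁ hf₂ hb).trans <|
      RepIso.dsum fun _ => (repIso_indRep_finsuppIndRep _ _).symm

end MackeyIsomorphism

theorem mackey_tensor_product
    (F : Type*) [Field F] {G : Type*} [Group G] (H₁ H₂ : Subgroup G)
    (V₁ : Type*) [AddCommGroup V₁] [Module F V₁] (ρ₁ : Representation F ↥H₁ V₁)
    (V₂ : Type*) [AddCommGroup V₂] [Module F V₂] (ρ₂ : Representation F ↥H₂ V₂)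
    (D : Set G) (hD : IsDCosetReps H₁ H₂ D)
    (x y : D → G)
    (hxy : ∀ d : D, ∃ h₁ ∈ H₁, ∃ h₂ ∈ H₂, (x d)⁻¹ * y d = h₁ * (d : G) * h₂) :
    RepIso F ((IndRep F H₁ ρ₁).tprod (IndRep F H₂ ρ₂))
      (dsumRep F fun d : D =>
        IndRep F (conjSubgroup (x d) H₁ ⊓ conjSubgroup (y d) H₂)
          (Representation.tprod
            (ρ₁.comp (unconjHom (x d) H₁
              (K := conjSubgroup (x d) H₁ ⊓ conjSubgroup (y d) H₂) inf_le_left))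
            (ρ₂.comp (unconjHom (y d) H₂
              (K := conjSubgroup (x d) H₁ ⊓ conjSubgroup (y d) H₂) inf_le_right)))) ∧
    RepIso F ((IndRep F H₁ ρ₁).tprod (IndRep F H₂ ρ₂))
      (dsumRep F fun d : D =>
        IndRep F (H₁ ⊓ conjSubgroup (d : G) H₂)
          (Representation.tprod
            (ρ₁.comp (Subgroup.inclusion
              (inf_le_left : H₁ ⊓ conjSubgroup (d : G) H₂ ≤ H₁)))
            (ρ₂.comp (unconjHom (d : G) H₂
              (K := H₁ ⊓ conjSubgroup (d : G) H₂) inf_le_right)))) := by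
  constructor
  · exact repIso_tprod_indRep ρ₁ ρ₂ _ _ (fun _ _ => rfl) (fun _ _ => rfl) hD
      (fun d => DoubleCoset.mem_doubleCoset.2 (hxy d)) (fun _ => rfl)
  · exact repIso_tprod_indRep ρ₁ ρ₂ (x := 1) (y := Subtype.val) _ _ (fun _ _ => by simp)
      (fun _ _ => rfl) hD (fun d => by simpa using DoubleCoset.mem_doubleCoset_self H₁ H₂ d)
      (fun _ => by rw [Pi.one_apply, conjSubgroup_one])
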